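/- arXiv:2410.05420 — 2 statements merged into one kernel-verified Lean document; each statement's English description precedes it below -/
import Mathlib

section
/- For any finite graph G and any positive integer k, α(G) = k if and only if G has an extended independent set of order k but no extended independent set of any larger order. Equivalently, every finite graph G has an extended independent set, and the maximum order of an extended independent set of G equals α(G). -/
open Filter Asymptotics Real

/-- The independence number of a graph: the maximum size of a set of vertices
containing no edge. -/
noncomputable def indepNum {V : Type*} (G : SimpleGraph V) : ℕ :=
  sSup {k | ∃ s : Finset V, s.card = k ∧ ∀ u ∈ s, ∀ v ∈ s, ¬ G.Adj u v}

/-- `u` and `w` are connected by a walk of `G` all of whose vertices lie in `K`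
(i.e. they lie in the same connected component of the induced subgraph `G[K]`). -/
def ReachWithin {V : Type*} (G : SimpleGraph V) (K : Finset V) : V → V → Prop :=
  Relation.ReflTransGen (fun a b => a ∈ K ∧ b ∈ K ∧ G.Adj a b)

-- `K` is an extended independent set of order `k` in `G`: for some `0 ≤ r ≤ k`, `K` has
-- `k + r` vertices, the induced subgraph `G[K]` has no cycles, exactly `2r` non-isolated
-- vertices and a perfect matching `M` among those `2r` vertices, and every vertex outside
-- `K` has either at least two neighbors in `K` that are isolated in `G[K]`, or at least two
-- neighbors in `K` lying in the same connected component of `G[K]`.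
open scoped Classical in
def IsExtIndepSet {V : Type*} [Fintype V] [DecidableEq V] (G : SimpleGraph V) (k : ℕ)
    (K : Finset V) : Prop :=
  ∃ r : ℕ, r ≤ k ∧ K.card = k + r ∧
    (G.induce (↑K : Set V)).IsAcyclic ∧
    (K.filter fun v => ∃ u ∈ K, G.Adj v u).card = 2 * r ∧
    (∃ M : Finset (Sym2 V), M.card = r ∧
       (∀ e ∈ M, e ∈ G.edgeSet) ∧
       (∀ e ∈ M, ∀ v : V, v ∈ e → v ∈ K) ∧
       (∀ e ∈ M, ∀ f ∈ M, e ≠ f → ∀ v : V, v ∈ e → v ∉ f) ∧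
       (∀ v ∈ K, (∃ u ∈ K, G.Adj v u) → ∃ e ∈ M, v ∈ e)) ∧
    (∀ v : V, v ∉ K →
      ∃ u ∈ K, ∃ w ∈ K, u ≠ w ∧ G.Adj v u ∧ G.Adj v w ∧
        (((∀ x ∈ K, ¬ G.Adj u x) ∧ (∀ x ∈ K, ¬ G.Adj w x)) ∨ ReachWithin G K u w))

/-!
If `G[K]` is a forest, it is 2-colorable, and the two ends of each matching edge get different
colors; deleting from `K` the non-isolated vertices of one color leaves an independent set of
size `|K| - r = k`, so `k ≤ α(G)`.

Conversely, start from a maximum independent set (`r = 0`) and take a largest `K` with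
`|K| = α(G) + r` satisfying every clause but the one on outside vertices. If some `v ∉ K`
violated that clause, its neighbors in `K` would lie in distinct components of `G[K]`, at most
one of them isolated. If one, `u₀`, is isolated, adding `v` with the matching edge `v u₀`
gives a larger such `K`. Otherwise, recolor components so that every neighbor of `v` gets the
deleted color: the remaining vertices together with `v` form an independent set of size
`α(G) + 1`.
-/

namespace SimpleGraph

variable {V : Type*}

theorem _root_.indepNum_eq_indepNum (G : SimpleGraph V) : _root_.indepNum G = G.indepNum := by
  unfold _root_.indepNum SimpleGraph.indepNum
  congr! 3 with n
  refine exists_congr fun s => ?_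
  rw [isNIndepSet_iff, and_comm]
  refine and_congr_left' ⟨fun h u hu w hw _ => h u hu w hw, fun h u hu w hw huw => ?_⟩
  obtain rfl | hne := eq_or_ne u w
  · exact G.loopless.irrefl u huw
  · exact h hu hw hne huw

/-- Swap the two colors on every component containing a vertex of `F` colored `true`. -/
lemma Coloring.exists_eq_false_of_pairwise_not_reachable {H : SimpleGraph V}
    (C : H.Coloring Bool) {F : Set V} (hF : F.Pairwise fun a b => ¬ H.Reachable a b) :
    ∃ C' : H.Coloring Bool, ∀ u ∈ F, C' u = false := by
  classical
  let flip (u : V) : Bool := decide (∃ w ∈ F, H.Reachable w u ∧ C w = true)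
  have flip_eq {u w : V} (h : H.Reachable u w) : flip u = flip w := by
    simp only [flip, decide_eq_decide]
    exact exists_congr fun x => and_congr_right fun _ =>
      ⟨fun ⟨hx, hc⟩ => ⟨hx.trans h, hc⟩, fun ⟨hx, hc⟩ => ⟨hx.trans h.symm, hc⟩⟩
  refine ⟨Coloring.mk (fun u => xor (C u) (flip u)) fun {u w} huw => ?_, fun u hu => ?_⟩
  · rw [flip_eq huw.reachable, Ne, Bool.xor_left_inj]
    exact C.valid huw
  · show xor (C u) (flip u) = false
    cases hCu : C u
    · have : ¬ ∃ w ∈ F, H.Reachable w u ∧ C w = true := by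
        rintro ⟨w, hw, hwu, hCw⟩
        obtain rfl | hne := eq_or_ne w u
        · simp [hCu] at hCw
        · exact hF hw hu hne hwu
      simp [flip, this]
    · simpa [flip] using ⟨u, hu, Reachable.refl u, hCu⟩

/-- A cycle through `v` enters and leaves `v` through two distinct neighbors, joined by the
rest of the cycle, which avoids `v`. -/
lemma IsAcyclic.of_pairwise_not_reachable_neighbors {H H' : SimpleGraph V} {v : V}
    (hH : H.IsAcyclic) (hle : ∀ ⦃a b⦄, H'.Adj a b → a ≠ v → b ≠ v → H.Adj a b)
    (hnbr : ∀ ⦃a b⦄, H'.Adj v a → H'.Adj v b → a ≠ b → ¬ H.Reachable a b) :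
    H'.IsAcyclic := by
  have edges_mem {a b : V} (p : H'.Walk a b) (hv : v ∉ p.support) :
      ∀ e ∈ p.edges, e ∈ H.edgeSet := by
    intro e he
    induction e with
    | h x y =>
      exact hle (p.adj_of_mem_edges he)
        (ne_of_mem_of_not_mem (p.fst_mem_support_of_mem_edges he) hv)
        (ne_of_mem_of_not_mem (p.snd_mem_support_of_mem_edges he) hv)
  have no_cycle_at (c : H'.Walk v v) : ¬ c.IsCycle := by
    cases c with
    | nil => exact Walk.not_isCycle_nil
    | @cons _ a _ ha p =>
      rw [Walk.cons_isCycle_iff]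
      rintro ⟨hp, hedge⟩
      have hrev := hp.reverse
      cases hq : p.reverse with
      | nil => exact ha.ne rfl
      | @cons _ b _ hb q =>
        rw [hq, Walk.cons_isPath_iff] at hrev
        have hab : a ≠ b := by
          rintro rfl
          apply hedge
          have : s(v, a) ∈ p.reverse.edges := by simp [hq]
          simpa using this
        exact hnbr ha hb hab (q.transfer H (edges_mem q hrev.2)).reachable.symm
  classical
  intro x c hc
  by_cases hv : v ∈ c.support
  · exact no_cycle_at _ (hc.rotate hv)
  · exact hH _ (hc.transfer (edges_mem c hv))

section ExtendedIndependentSets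

open Finset
open scoped Classical

def restrict (G : SimpleGraph V) (K : Finset V) : SimpleGraph V where
  Adj a b := a ∈ K ∧ b ∈ K ∧ G.Adj a b
  symm := ⟨fun _ _ h => ⟨h.2.1, h.1, h.2.2.symm⟩⟩
  loopless := ⟨fun a h => G.loopless.irrefl a h.2.2⟩

noncomputable def nonisolated (G : SimpleGraph V) (K : Finset V) : Finset V :=
  K.filter fun v => ∃ u ∈ K, G.Adj v u

/-- `M` is a perfect matching of the non-isolated vertices of `G[K]`. -/
structure IsNonisolatedMatching (G : SimpleGraph V) (K : Finset V) (M : Finset (Sym2 V)) :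
    Prop where
  mem_edgeSet : ∀ e ∈ M, e ∈ G.edgeSet
  mem_of_mem : ∀ e ∈ M, ∀ v : V, v ∈ e → v ∈ K
  disjoint : ∀ e ∈ M, ∀ f ∈ M, e ≠ f → ∀ v : V, v ∈ e → v ∉ f
  exists_mem : ∀ v ∈ K, (∃ u ∈ K, G.Adj v u) → ∃ e ∈ M, v ∈ e

def IsDoublyAttached (G : SimpleGraph V) (K : Finset V) (v : V) : Prop :=
  ∃ u ∈ K, ∃ w ∈ K, u ≠ w ∧ G.Adj v u ∧ G.Adj v w ∧
    (((∀ x ∈ K, ¬ G.Adj u x) ∧ (∀ x ∈ K, ¬ G.Adj w x)) ∨ ReachWithin G K u w)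

variable {G : SimpleGraph V} {K : Finset V}

lemma reachWithin_iff_reachable {u w : V} :
    ReachWithin G K u w ↔ (G.restrict K).Reachable u w :=
  (reachable_iff_reflTransGen (G := G.restrict K) u w).symm

lemma isAcyclic_induce_of_isAcyclic_restrict (h : (G.restrict K).IsAcyclic) :
    (G.induce (K : Set V)).IsAcyclic :=
  h.comap
    (⟨Subtype.val, fun {a b} hab => ⟨a.2, b.2, hab⟩⟩ : G.induce (K : Set V) →g G.restrict K)
    Subtype.val_injective

lemma nonempty_coloring_restrict_of_isAcyclic_induce (h : (G.induce (K : Set V)).IsAcyclic) :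
    Nonempty ((G.restrict K).Coloring Bool) := by
  let c := (G.induce (K : Set V)).recolorOfEquiv finTwoEquiv h.coloringTwo
  exact ⟨Coloring.mk (fun v => if hv : v ∈ K then c ⟨v, hv⟩ else false) fun {u w} huw => by
    simpa only [dif_pos huw.1, dif_pos huw.2.1] using
      c.valid (show (G.induce (K : Set V)).Adj ⟨u, huw.1⟩ ⟨w, huw.2.1⟩ from huw.2.2)⟩

lemma isAcyclic_restrict_insert [DecidableEq V] {v : V} (h : (G.restrict K).IsAcyclic)
    (hnr : {u | u ∈ K ∧ G.Adj v u}.Pairwise fun a b => ¬ (G.restrict K).Reachable a b) :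
    (G.restrict (insert v K)).IsAcyclic := by
  have mem_of_adj {a b : V} (hab : (G.restrict (insert v K)).Adj a b) (ha : a ≠ v) : a ∈ K :=
    (mem_insert.mp hab.1).resolve_left ha
  refine h.of_pairwise_not_reachable_neighbors (v := v) (fun a b hab ha hb => ?_)
    fun a b ha hb hne => ?_
  · exact ⟨mem_of_adj hab ha, mem_of_adj hab.symm hb, hab.2.2⟩
  · exact hnr ⟨mem_of_adj ha.symm ha.2.2.ne', ha.2.2⟩ ⟨mem_of_adj hb.symm hb.2.2.ne', hb.2.2⟩ hne

namespace IsNonisolatedMatching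

variable {M : Finset (Sym2 V)}

lemma eq_of_mem_of_mem (hM : IsNonisolatedMatching G K M) {e f : Sym2 V} (he : e ∈ M)
    (hf : f ∈ M) {x : V} (hxe : x ∈ e) (hxf : x ∈ f) : e = f :=
  by_contra fun hne => hM.disjoint e he f hf hne x hxe hxf

lemma restrict_adj (hM : IsNonisolatedMatching G K M) {x y : V} (h : s(x, y) ∈ M) :
    (G.restrict K).Adj x y :=
  ⟨hM.mem_of_mem _ h x (Sym2.mem_mk_left x y), hM.mem_of_mem _ h y (Sym2.mem_mk_right x y),
    hM.mem_edgeSet _ h⟩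

lemma mem_nonisolated_iff (hM : IsNonisolatedMatching G K M) {u : V} :
    u ∈ nonisolated G K ↔ ∃ e ∈ M, u ∈ e := by
  refine ⟨fun hu => hM.exists_mem u (mem_filter.mp hu).1 (mem_filter.mp hu).2, ?_⟩
  rintro ⟨e, he, hu⟩
  induction e with
  | h x y =>
    have hxy := hM.restrict_adj he
    rcases Sym2.mem_iff.mp hu with rfl | rfl
    · exact mem_filter.mpr ⟨hxy.1, y, hxy.2.1, hxy.2.2⟩
    · exact mem_filter.mpr ⟨hxy.2.1, x, hxy.1, hxy.2.2.symm⟩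

lemma eq_of_color_eq (hM : IsNonisolatedMatching G K M) (C : (G.restrict K).Coloring Bool)
    {e : Sym2 V} (he : e ∈ M) {u w : V} (hu : u ∈ e) (hw : w ∈ e) (h : C u = C w) :
    u = w := by
  induction e with
  | h x y =>
    have hxy := C.valid (hM.restrict_adj he)
    rcases Sym2.mem_iff.mp hu with rfl | rfl <;> rcases Sym2.mem_iff.mp hw with rfl | rfl
    exacts [rfl, (hxy h).elim, (hxy h.symm).elim, rfl]

lemma exists_mem_color_eq (hM : IsNonisolatedMatching G K M) (C : (G.restrict K).Coloring Bool)
    {e : Sym2 V} (he : e ∈ M) (b : Bool) : ∃ u ∈ e, C u = b := by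
  induction e with
  | h x y =>
    have hxy := C.valid (hM.restrict_adj he)
    by_cases hx : C x = b
    · exact ⟨x, Sym2.mem_mk_left x y, hx⟩
    · refine ⟨y, Sym2.mem_mk_right x y, ?_⟩
      revert hx hxy
      cases C x <;> cases C y <;> cases b <;> simp

lemma card_filter_color (hM : IsNonisolatedMatching G K M) (C : (G.restrict K).Coloring Bool)
    (b : Bool) : ((nonisolated G K).filter (C · = b)).card = M.card := by
  have hcov (u : V) (hu : u ∈ (nonisolated G K).filter (C · = b)) : ∃ e ∈ M, u ∈ e :=
    hM.mem_nonisolated_iff.mp (mem_filter.mp hu).1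
  refine card_bij (fun u hu => (hcov u hu).choose) (fun u hu => (hcov u hu).choose_spec.1)
    (fun u hu w hw huw => ?_) fun e he => ?_
  · obtain ⟨he, hue⟩ := (hcov u hu).choose_spec
    rw [huw] at he hue
    exact hM.eq_of_color_eq C he hue (hcov w hw).choose_spec.2
      (((mem_filter.mp hu).2).trans (mem_filter.mp hw).2.symm)
  · obtain ⟨u, hue, hu⟩ := hM.exists_mem_color_eq C he b
    have hmem : u ∈ (nonisolated G K).filter (C · = b) :=
      mem_filter.mpr ⟨hM.mem_nonisolated_iff.mpr ⟨e, he, hue⟩, hu⟩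
    exact ⟨u, hmem, hM.eq_of_mem_of_mem (hcov u hmem).choose_spec.1 he
      (hcov u hmem).choose_spec.2 hue⟩

lemma card_nonisolated (hM : IsNonisolatedMatching G K M) (C : (G.restrict K).Coloring Bool) :
    (nonisolated G K).card = 2 * M.card := by
  rw [← card_filter_add_card_filter_not (C · = true)]
  simp only [Bool.not_eq_true, hM.card_filter_color C]
  ring

lemma insert [DecidableEq V] (hM : IsNonisolatedMatching G K M) {v u₀ : V} (hv : v ∉ K)
    (hu₀ : u₀ ∈ K) (hvu₀ : G.Adj v u₀) (hu₀iso : ∀ x ∈ K, ¬ G.Adj u₀ x)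
    (huniq : ∀ w ∈ K, G.Adj v w → (∀ x ∈ K, ¬ G.Adj w x) → w = u₀) :
    IsNonisolatedMatching G (insert v K) (insert s(v, u₀) M) := by
  have hnew (f : Sym2 V) (hf : f ∈ M) (x : V) (hx : x ∈ s(v, u₀)) : x ∉ f := by
    intro hxf
    rcases Sym2.mem_iff.mp hx with rfl | rfl
    · exact hv (hM.mem_of_mem f hf x hxf)
    · obtain ⟨-, y, hy, hxy⟩ := mem_filter.mp (hM.mem_nonisolated_iff.mpr ⟨f, hf, hxf⟩)
      exact hu₀iso y hy hxy
  refine ⟨?_, ?_, ?_, ?_⟩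
  · simp only [mem_insert, forall_eq_or_imp]
    exact ⟨hvu₀, hM.mem_edgeSet⟩
  · intro e he x hx
    rcases mem_insert.mp he with rfl | he
    · rcases Sym2.mem_iff.mp hx with rfl | rfl
      exacts [mem_insert_self _ _, mem_insert_of_mem hu₀]
    · exact mem_insert_of_mem (hM.mem_of_mem e he x hx)
  · simp only [mem_insert]
    rintro e (rfl | he) f (rfl | hf) hef x hxe hxf
    exacts [hef rfl, hnew f hf x hxe hxf, hnew e he x hxf hxe,
      hM.disjoint e he f hf hef x hxe hxf]
  · simp only [mem_insert, forall_eq_or_imp]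
    refine ⟨fun _ => ⟨_, .inl rfl, Sym2.mem_mk_left v u₀⟩, fun w hw ⟨x, hx, hwx⟩ => ?_⟩
    by_cases hwiso : ∀ y ∈ K, ¬ G.Adj w y
    · obtain rfl | hxK := hx
      · exact ⟨_, .inl rfl, huniq w hw hwx.symm hwiso ▸ Sym2.mem_mk_right x w⟩
      · exact (hwiso x hxK hwx).elim
    · push Not at hwiso
      obtain ⟨e, he, hwe⟩ := hM.exists_mem w hw hwiso
      exact ⟨e, .inr he, hwe⟩

end IsNonisolatedMatching

noncomputable def colorSide (C : (G.restrict K).Coloring Bool) : Finset V :=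
  K \ (nonisolated G K).filter (C · = false)

lemma isIndepSet_colorSide (C : (G.restrict K).Coloring Bool) :
    G.IsIndepSet (colorSide C : Set V) := by
  intro u hu w hw _ huw
  simp only [colorSide, coe_sdiff, Set.mem_sdiff, mem_coe, mem_filter, not_and] at hu hw
  have hu' := hu.2 (mem_filter.mpr ⟨hu.1, w, hw.1, huw⟩)
  have hw' := hw.2 (mem_filter.mpr ⟨hw.1, u, hu.1, huw.symm⟩)
  simp only [Bool.not_eq_false] at hu' hw'
  exact C.valid ⟨hu.1, hw.1, huw⟩ (hu'.trans hw'.symm)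

lemma IsNonisolatedMatching.card_colorSide_add {M : Finset (Sym2 V)}
    (hM : IsNonisolatedMatching G K M) (C : (G.restrict K).Coloring Bool) :
    (colorSide C).card + M.card = K.card := by
  rw [colorSide, ← hM.card_filter_color C false]
  exact card_sdiff_add_card_eq_card ((filter_subset _ _).trans (filter_subset _ _))

lemma exists_isIndepSet_of_not_reachable_neighbors {M : Finset (Sym2 V)}
    (hac : (G.restrict K).IsAcyclic) (hM : IsNonisolatedMatching G K M) {v : V} (hv : v ∉ K)
    (hnoiso : ∀ u ∈ K, G.Adj v u → ∃ x ∈ K, G.Adj u x)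
    (hnr : {u | u ∈ K ∧ G.Adj v u}.Pairwise fun a b => ¬ (G.restrict K).Reachable a b) :
    ∃ S : Finset V, G.IsIndepSet (S : Set V) ∧ S.card + M.card = K.card + 1 := by
  obtain ⟨C⟩ := nonempty_coloring_restrict_of_isAcyclic_induce
    (isAcyclic_induce_of_isAcyclic_restrict hac)
  obtain ⟨C', hC'⟩ := C.exists_eq_false_of_pairwise_not_reachable hnr
  have hvS : v ∉ colorSide C' := fun h => hv (mem_sdiff.mp h).1
  refine ⟨insert v (colorSide C'), ?_, ?_⟩
  · rw [coe_insert, isIndepSet_iff, Set.pairwise_insert]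
    refine ⟨isIndepSet_colorSide C', fun u hu _ => ?_⟩
    obtain ⟨huK, hu⟩ := mem_sdiff.mp hu
    have hvu : ¬ G.Adj v u := fun hvu =>
      hu (mem_filter.mpr ⟨mem_filter.mpr ⟨huK, hnoiso u huK hvu⟩, hC' u ⟨huK, hvu⟩⟩)
    exact ⟨hvu, fun huv => hvu huv.symm⟩
  · rw [card_insert_of_notMem hvS, add_right_comm, hM.card_colorSide_add C']

lemma IsNonisolatedMatching.isExtIndepSet [Fintype V] [DecidableEq V] {M : Finset (Sym2 V)}
    {k : ℕ} (hM : IsNonisolatedMatching G K M) (hac : (G.restrict K).IsAcyclic)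
    (hcard : K.card = k + M.card) (hattached : ∀ v ∉ K, IsDoublyAttached G K v) :
    IsExtIndepSet G k K := by
  obtain ⟨C⟩ := nonempty_coloring_restrict_of_isAcyclic_induce
    (isAcyclic_induce_of_isAcyclic_restrict hac)
  have hT := hM.card_nonisolated C
  have hTK : (nonisolated G K).card ≤ K.card := card_le_card (filter_subset _ _)
  exact ⟨M.card, by omega, hcard, isAcyclic_induce_of_isAcyclic_restrict hac, hT,
    ⟨M, rfl, hM.mem_edgeSet, hM.mem_of_mem, hM.disjoint, hM.exists_mem⟩, hattached⟩

theorem _root_.IsExtIndepSet.le_indepNum [Fintype V] [DecidableEq V] {k : ℕ}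
    (h : IsExtIndepSet G k K) : k ≤ G.indepNum := by
  obtain ⟨r, -, hcard, hac, -, ⟨M, hMcard, h₁, h₂, h₃, h₄⟩, -⟩ := h
  obtain ⟨C⟩ := nonempty_coloring_restrict_of_isAcyclic_induce hac
  have hS := (isIndepSet_colorSide C).card_le_indepNum
  have := IsNonisolatedMatching.card_colorSide_add ⟨h₁, h₂, h₃, h₄⟩ C
  omega

/-- The clauses of `IsExtIndepSet G G.indepNum K` except the one on vertices outside `K`. -/
def IsExtIndepCandidate (G : SimpleGraph V) (K : Finset V) : Prop :=
  (G.restrict K).IsAcyclic ∧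
    ∃ M : Finset (Sym2 V), IsNonisolatedMatching G K M ∧ K.card = G.indepNum + M.card

lemma IsNIndepSet.isExtIndepCandidate {I : Finset V} (hI : G.IsNIndepSet G.indepNum I) :
    IsExtIndepCandidate G I := by
  have hnadj (u : V) (hu : u ∈ I) (w : V) (hw : w ∈ I) : ¬ G.Adj u w := fun huw =>
    hI.isIndepSet hu hw huw.ne huw
  refine ⟨isAcyclic_bot.anti fun u w huw => hnadj u huw.1 w huw.2.1 huw.2.2, ∅,
    ⟨by simp, by simp, by simp, fun u hu ⟨w, hw, huw⟩ => (hnadj u hu w hw huw).elim⟩, by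
      simp [hI.card_eq]⟩

theorem exists_isExtIndepSet_indepNum [Fintype V] [DecidableEq V] (G : SimpleGraph V) :
    ∃ K : Finset V, IsExtIndepSet G G.indepNum K := by
  obtain ⟨I, hI⟩ := G.exists_isNIndepSet_indepNum
  obtain ⟨K, hK, hmax⟩ := (univ.filter (IsExtIndepCandidate G)).exists_max_image card
    ⟨I, mem_filter.mpr ⟨mem_univ _, hI.isExtIndepCandidate⟩⟩
  obtain ⟨hac, M, hM, hcard⟩ := (mem_filter.mp hK).2
  refine ⟨K, hM.isExtIndepSet hac hcard fun v hv => ?_⟩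
  by_contra hfail
  have hnr : {u | u ∈ K ∧ G.Adj v u}.Pairwise fun a b => ¬ (G.restrict K).Reachable a b :=
    fun u hu w hw hne hr =>
      hfail ⟨u, hu.1, w, hw.1, hne, hu.2, hw.2, .inr (reachWithin_iff_reachable.mpr hr)⟩
  by_cases hiso : ∃ u₀ ∈ K, G.Adj v u₀ ∧ ∀ x ∈ K, ¬ G.Adj u₀ x
  · obtain ⟨u₀, hu₀, hvu₀, hu₀iso⟩ := hiso
    have huniq (w : V) (hw : w ∈ K) (hvw : G.Adj v w) (hwiso : ∀ x ∈ K, ¬ G.Adj w x) :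
        w = u₀ :=
      by_contra fun hne =>
        hfail ⟨w, hw, u₀, hu₀, hne, hvw, hvu₀, .inl ⟨hwiso, hu₀iso⟩⟩
    have hvM : s(v, u₀) ∉ M := fun h => hv (hM.mem_of_mem _ h v (Sym2.mem_mk_left v u₀))
    have hbigger : IsExtIndepCandidate G (insert v K) :=
      ⟨isAcyclic_restrict_insert hac hnr, _, hM.insert hv hu₀ hvu₀ hu₀iso huniq, by
        rw [card_insert_of_notMem hv, card_insert_of_notMem hvM, hcard, add_assoc]⟩
    have := hmax _ (mem_filter.mpr ⟨mem_univ _, hbigger⟩)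
    rw [card_insert_of_notMem hv] at this
    omega
  · push Not at hiso
    obtain ⟨S, hS, hScard⟩ := exists_isIndepSet_of_not_reachable_neighbors hac hM hv hiso hnr
    have := hS.card_le_indepNum
    omega

end ExtendedIndependentSets

end SimpleGraph

theorem stmt4_general {V : Type*} [Fintype V] [DecidableEq V] (G : SimpleGraph V) (k : ℕ) :
    indepNum G = k ↔
      ((∃ K : Finset V, IsExtIndepSet G k K) ∧
        ∀ k' : ℕ, k < k' → ∀ K : Finset V, ¬ IsExtIndepSet G k' K) := by
  rw [indepNum_eq_indepNum]
  refine ⟨?_, fun ⟨⟨K, hK⟩, hmax⟩ => ?_⟩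
  · rintro rfl
    exact ⟨G.exists_isExtIndepSet_indepNum, fun k' hk' K hK => hk'.not_ge hK.le_indepNum⟩
  · obtain ⟨K', hK'⟩ := G.exists_isExtIndepSet_indepNum
    exact le_antisymm (not_lt.mp fun hlt => hmax _ hlt K' hK') hK.le_indepNum

/-- For any finite graph `G` and positive integer `k`, `α(G) = k` if and only if `G` has an
extended independent set of order `k` but no extended independent set of larger order. -/
theorem stmt4 {V : Type*} [Fintype V] [DecidableEq V] (G : SimpleGraph V) (k : ℕ)
    (hk : 0 < k) :
    indepNum G = k ↔
      ((∃ K : Finset V, IsExtIndepSet G k K) ∧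
        ∀ k' : ℕ, k < k' → ∀ K : Finset V, ¬ IsExtIndepSet G k' K) :=
  stmt4_general G k
end

section
/- For every c > 2 there exists a unique positive λ_c with E[χ(λ_c)] = c, and as c → ∞ the following asymptotics hold: λ_c = c − c^2 e^{−c} ± e^{−2c + O(log c)} and η̄_c = c ± e^{−c + O(log c)}; that is, there exist constants C > 0 and c₀ > 2 such that for all c ≥ c₀, |λ_c − (c − c^2 e^{−c})| ≤ e^{−2c + C log c} and |η̄_c − c| ≤ e^{−c + C log c}. -/
open Real

/-- The mean of the truncated Poisson random variable `χ(λ)` with lower bound `2`: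
`E[χ(λ)] = λ(e^λ − 1)/(e^λ − λ − 1)`. -/
noncomputable def truncPoissonMean (lam : ℝ) : ℝ :=
  lam * (Real.exp lam - 1) / (Real.exp lam - lam - 1)

/-- `η̄` associated to a parameter `λ`: `λ e^λ / (e^λ − 1)`. -/
noncomputable def etaBar (lam : ℝ) : ℝ :=
  lam * Real.exp lam / (Real.exp lam - 1)

/-!
With `D(λ) = e^λ − λ − 1` one has `E[χ(λ)] = λ + λ²/D(λ)`. Since `D(λ) ≥ λ²/2`, the mean lies
in `(λ, λ + 2]`, which gives existence by the intermediate value theorem; uniqueness holds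
because the derivative of the mean has numerator `e^λ (e^λ + e^{−λ} − 2 − λ²)` and
`e^λ + e^{−λ} − 2 = (2 sinh(λ/2))² > λ²`.

For the asymptotics, `λ ≥ c − 2` is large, so `c − λ = λ²/D(λ) ≤ 1` and `e^{−λ} ≤ 3e^{−c}`.
The identity `1/D = e^{−λ} + (λ + 1)e^{−λ}/D` gives `c − λ = λ²e^{−λ} + O(λ³e^{−2λ})`, and
`λ²e^{−λ} − c²e^{−c} = e^{−c}(λ²(e^{c−λ} − 1) − (c − λ)(c + λ)) = O(c⁴e^{−2c})`. Finally
`η̄ − c = λ/(e^λ − 1) − (c − λ)` is a difference of two nonnegative `O(c²e^{−c})` terms.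
-/

namespace TruncPoisson

lemma exp_sub_self_sub_one_pos {x : ℝ} (hx : 0 < x) : 0 < exp x - x - 1 := by
  linarith [add_one_lt_exp hx.ne']

lemma cubic_le_exp {x : ℝ} (hx : 0 ≤ x) : 1 + x + x ^ 2 / 2 + x ^ 3 / 6 ≤ exp x := by
  have h := sum_le_exp_of_nonneg hx 4
  simp only [Finset.sum_range_succ, Finset.sum_range_zero, Nat.factorial] at h
  norm_num at h
  linarith

lemma sq_lt_exp_add_exp_neg_sub_two {x : ℝ} (hx : 0 < x) : x ^ 2 < exp x + exp (-x) - 2 := by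
  have hsinh : x / 2 < sinh (x / 2) := self_lt_sinh_iff.2 (by linarith)
  have hsq : exp x + exp (-x) - 2 = (2 * sinh (x / 2)) ^ 2 := by
    have hx2 : exp x = exp (x / 2) ^ 2 := by rw [sq, ← exp_add, add_halves]
    have hnx2 : exp (-x) = exp (-(x / 2)) ^ 2 := by rw [sq, ← exp_add]; ring_nf
    have : exp (x / 2) * exp (-(x / 2)) = 1 := by rw [← exp_add]; simp
    rw [hx2, hnx2, sinh_eq]
    linear_combination 2 * this
  rw [hsq]
  nlinarith

lemma truncPoissonMean_eq_add {l : ℝ} (hl : 0 < l) :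
    truncPoissonMean l = l + l ^ 2 / (exp l - l - 1) := by
  have := exp_sub_self_sub_one_pos hl
  rw [truncPoissonMean]
  field_simp
  ring

lemma etaBar_eq_add {l : ℝ} (hl : 0 < l) : etaBar l = l + l / (exp l - 1) := by
  have : 0 < exp l - 1 := by linarith [add_one_lt_exp hl.ne']
  rw [etaBar]
  field_simp
  ring

lemma sq_div_exp_sub_self_sub_one_pos {l : ℝ} (hl : 0 < l) : 0 < l ^ 2 / (exp l - l - 1) :=
  div_pos (pow_pos hl 2) (exp_sub_self_sub_one_pos hl)

lemma sq_div_exp_sub_self_sub_one_le_two {l : ℝ} (hl : 0 < l) : l ^ 2 / (exp l - l - 1) ≤ 2 := by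
  rw [div_le_iff₀ (exp_sub_self_sub_one_pos hl)]
  linarith [quadratic_le_exp_of_nonneg hl.le]

lemma lt_truncPoissonMean {l : ℝ} (hl : 0 < l) : l < truncPoissonMean l := by
  rw [truncPoissonMean_eq_add hl]
  linarith [sq_div_exp_sub_self_sub_one_pos hl]

lemma truncPoissonMean_le_add_two {l : ℝ} (hl : 0 < l) : truncPoissonMean l ≤ l + 2 := by
  rw [truncPoissonMean_eq_add hl]
  linarith [sq_div_exp_sub_self_sub_one_le_two hl]

lemma hasDerivAt_truncPoissonMean {l : ℝ} (hl : 0 < l) :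
    HasDerivAt truncPoissonMean
      (exp l * (exp l + exp (-l) - 2 - l ^ 2) / (exp l - l - 1) ^ 2) l := by
  have hD := exp_sub_self_sub_one_pos hl
  have hnum : HasDerivAt (fun x ↦ x * (exp x - 1)) (1 * (exp l - 1) + l * exp l) l :=
    (hasDerivAt_id l).mul ((hasDerivAt_exp l).sub_const 1)
  have hden : HasDerivAt (fun x ↦ exp x - x - 1) (exp l - 1) l :=
    ((hasDerivAt_exp l).sub (hasDerivAt_id' l)).sub_const 1
  refine (hnum.div hden hD.ne').congr_deriv ?_
  have : exp l * exp (-l) = 1 := by rw [← exp_add]; simp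
  congr 1
  linear_combination (-1) * this

lemma strictMonoOn_truncPoissonMean : StrictMonoOn truncPoissonMean (Set.Ioi 0) := by
  refine strictMonoOn_of_deriv_pos (convex_Ioi 0)
    (fun x hx ↦ (hasDerivAt_truncPoissonMean hx).continuousAt.continuousWithinAt) fun x hx ↦ ?_
  rw [interior_Ioi] at hx
  rw [(hasDerivAt_truncPoissonMean hx).deriv]
  have := sq_lt_exp_add_exp_neg_sub_two hx
  have := exp_sub_self_sub_one_pos hx
  exact div_pos (mul_pos (exp_pos x) (by linarith)) (by positivity)

lemma exists_truncPoissonMean_eq {c : ℝ} (hc : 2 < c) : ∃ l, 0 < l ∧ truncPoissonMean l = c := by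
  have hcont : ContinuousOn truncPoissonMean (Set.Icc (c - 2) c) := fun x hx ↦
    (hasDerivAt_truncPoissonMean (by linarith [hx.1])).continuousAt.continuousWithinAt
  obtain ⟨l, hl, hlc⟩ := intermediate_value_Icc (by linarith) hcont
    ⟨by linarith [truncPoissonMean_le_add_two (by linarith : 0 < c - 2)],
      (lt_truncPoissonMean (by linarith)).le⟩
  exact ⟨l, by linarith [hl.1], hlc⟩

lemma existsUnique_truncPoissonMean_eq {c : ℝ} (hc : 2 < c) :
    ∃! l, 0 < l ∧ truncPoissonMean l = c := by
  obtain ⟨l, hl, hlc⟩ := exists_truncPoissonMean_eq hc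
  exact ⟨l, ⟨hl, hlc⟩, fun l' ⟨hl', hl'c⟩ ↦
    strictMonoOn_truncPoissonMean.injOn hl' hl (hl'c.trans hlc.symm)⟩

lemma div_exp_sub_one_le {a l : ℝ} (ha : 0 ≤ a) (hl : 1 ≤ l) :
    a / (exp l - 1) ≤ 2 * a * exp (-l) := by
  have h2 : 2 ≤ exp l := by linarith [add_one_le_exp l]
  have hinv : exp l * exp (-l) = 1 := by rw [← exp_add]; simp
  have hz : exp (-l) * 2 ≤ 1 := by nlinarith [exp_pos (-l)]
  rw [div_le_iff₀ (by linarith)]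
  linear_combination (-2 * a) * hinv + mul_le_mul_of_nonneg_left hz ha

lemma div_exp_sub_self_sub_one_le {a l : ℝ} (ha : 0 ≤ a) (hl : 3 ≤ l) :
    a / (exp l - l - 1) ≤ 2 * a * exp (-l) := by
  have hD : exp l ≤ 2 * (exp l - l - 1) := by
    nlinarith [quadratic_le_exp_of_nonneg (by linarith : (0 : ℝ) ≤ l)]
  have hinv : exp l * exp (-l) = 1 := by rw [← exp_add]; simp
  have hz : 1 ≤ exp (-l) * (2 * (exp l - l - 1)) := by
    nlinarith [mul_le_mul_of_nonneg_left hD (exp_pos (-l)).le]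
  rw [div_le_iff₀ (exp_sub_self_sub_one_pos (by linarith))]
  linear_combination mul_le_mul_of_nonneg_left hz ha

lemma sq_div_exp_sub_self_sub_one_eq {l : ℝ} (hl : 0 < l) :
    l ^ 2 / (exp l - l - 1) = l ^ 2 * exp (-l) + l ^ 2 * (l + 1) * exp (-l) / (exp l - l - 1) := by
  have hD := exp_sub_self_sub_one_pos hl
  have hinv : exp l * exp (-l) = 1 := by rw [← exp_add]; simp
  field_simp
  linear_combination (-1) * hinv

lemma exp_neg_le_three_mul_exp_neg {l c : ℝ} (h : c ≤ l + 1) : exp (-l) ≤ 3 * exp (-c) := by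
  calc exp (-l) = exp (c - l) * exp (-c) := by rw [← exp_add]; ring_nf
    _ ≤ 3 * exp (-c) := by
      gcongr
      exact (exp_le_exp.2 (by linarith)).trans exp_one_lt_three.le

lemma abs_sq_mul_exp_neg_sub_le {l c : ℝ} (hl : 1 ≤ l) (hlc : l ≤ c) (hcl : c ≤ l + 1) :
    |l ^ 2 * exp (-l) - c ^ 2 * exp (-c)| ≤ 2 * c ^ 2 * (c - l) * exp (-c) := by
  have hexp : |exp (c - l) - 1| ≤ 2 * |c - l| :=
    abs_exp_sub_one_le (by rw [abs_le]; constructor <;> linarith)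
  rw [abs_of_nonneg (by linarith : 0 ≤ c - l), abs_le] at hexp
  have hsplit : l ^ 2 * exp (-l) - c ^ 2 * exp (-c) =
      (l ^ 2 * (exp (c - l) - 1) - (c - l) * (c + l)) * exp (-c) := by
    rw [show -l = (c - l) + -c by ring, exp_add]; ring
  rw [hsplit, abs_mul, abs_of_pos (exp_pos _)]
  gcongr
  apply abs_sub_le_of_nonneg_of_le
  · have : 1 ≤ exp (c - l) := one_le_exp (by linarith)
    positivity
  · have hl2c2 : l ^ 2 ≤ c ^ 2 := by gcongr
    nlinarith [mul_le_mul_of_nonneg_left hexp.2 (sq_nonneg l)]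
  · exact mul_nonneg (by linarith) (by linarith)
  · have hcl2 : c + l ≤ 2 * c ^ 2 := by nlinarith
    nlinarith [mul_le_mul_of_nonneg_left hcl2 (by linarith : 0 ≤ c - l)]

lemma sq_div_exp_sub_self_sub_one_le_one {l : ℝ} (hl : 3 ≤ l) : l ^ 2 / (exp l - l - 1) ≤ 1 := by
  rw [div_le_iff₀ (exp_sub_self_sub_one_pos (by linarith))]
  nlinarith [cubic_le_exp (show 0 ≤ l by linarith)]

lemma truncPoissonMean_le_add_one {l : ℝ} (hl : 3 ≤ l) : truncPoissonMean l ≤ l + 1 := by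
  rw [truncPoissonMean_eq_add (by linarith)]
  linarith [sq_div_exp_sub_self_sub_one_le_one hl]

lemma truncPoissonMean_sub_self_le {l : ℝ} (hl : 3 ≤ l) :
    truncPoissonMean l - l ≤ 2 * l ^ 2 * exp (-l) := by
  rw [truncPoissonMean_eq_add (by linarith), add_sub_cancel_left]
  exact div_exp_sub_self_sub_one_le (sq_nonneg l) hl

lemma abs_self_sub_truncPoissonMean_le {l c : ℝ} (hl : 3 ≤ l) (hc : truncPoissonMean l = c) :
    |l - (c - c ^ 2 * exp (-c))| ≤ 48 * c ^ 4 * exp (-c) ^ 2 := by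
  have hl0 : 0 < l := by linarith
  have hlc : l ≤ c := hc ▸ (lt_truncPoissonMean hl0).le
  have hc0 : 0 < c := by linarith
  have hcl : c ≤ l + 1 := hc ▸ truncPoissonMean_le_add_one hl
  have hz : exp (-l) ≤ 3 * exp (-c) := exp_neg_le_three_mul_exp_neg hcl
  have hgap : c - l ≤ 2 * c ^ 2 * (3 * exp (-c)) :=
    (hc ▸ truncPoissonMean_sub_self_le hl).trans (by gcongr)
  set R := l ^ 2 * (l + 1) * exp (-l) / (exp l - l - 1)
  have hR0 : 0 ≤ R := div_nonneg (by positivity) (exp_sub_self_sub_one_pos hl0).le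
  have hR : R ≤ 2 * (l ^ 2 * (l + 1) * exp (-l)) * exp (-l) :=
    div_exp_sub_self_sub_one_le (by positivity) hl
  have hsplit : l - (c - c ^ 2 * exp (-c)) = (c ^ 2 * exp (-c) - l ^ 2 * exp (-l)) - R := by
    have := truncPoissonMean_eq_add hl0
    rw [sq_div_exp_sub_self_sub_one_eq hl0] at this
    linarith
  calc |l - (c - c ^ 2 * exp (-c))|
      ≤ |c ^ 2 * exp (-c) - l ^ 2 * exp (-l)| + |R| := hsplit ▸ abs_sub _ _
    _ ≤ 2 * c ^ 2 * (c - l) * exp (-c) + 2 * (l ^ 2 * (l + 1) * exp (-l)) * exp (-l) := by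
      rw [abs_sub_comm, abs_of_nonneg hR0]
      exact add_le_add (abs_sq_mul_exp_neg_sub_le (by linarith) hlc hcl) hR
    _ ≤ 2 * c ^ 2 * (2 * c ^ 2 * (3 * exp (-c))) * exp (-c)
        + 2 * (c ^ 2 * (2 * c) * (3 * exp (-c))) * (3 * exp (-c)) := by
      gcongr
      linarith
    _ ≤ 48 * c ^ 4 * exp (-c) ^ 2 := by
      nlinarith [mul_nonneg (by positivity : 0 ≤ c ^ 3 * exp (-c) ^ 2) (by linarith : 0 ≤ c - 1)]

lemma abs_etaBar_sub_truncPoissonMean_le {l c : ℝ} (hl : 3 ≤ l) (hc : truncPoissonMean l = c) :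
    |etaBar l - c| ≤ 6 * c ^ 2 * exp (-c) := by
  have hl0 : 0 < l := by linarith
  have hlc : l ≤ c := hc ▸ (lt_truncPoissonMean hl0).le
  have hc0 : 0 < c := by linarith
  have hz : exp (-l) ≤ 3 * exp (-c) :=
    exp_neg_le_three_mul_exp_neg (hc ▸ truncPoissonMean_le_add_one hl)
  rw [etaBar_eq_add hl0, show l + l / (exp l - 1) - c = l / (exp l - 1) - (c - l) by ring]
  apply abs_sub_le_of_nonneg_of_le
  · exact div_nonneg hl0.le (by linarith [add_one_le_exp l])
  · calc l / (exp l - 1) ≤ 2 * l * exp (-l) := div_exp_sub_one_le hl0.le (by linarith)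
      _ ≤ 2 * c * (3 * exp (-c)) := by gcongr
      _ ≤ 6 * c ^ 2 * exp (-c) := by
        nlinarith [mul_nonneg (by positivity : 0 ≤ c * exp (-c)) (by linarith : 0 ≤ c - 1)]
  · linarith
  · calc c - l ≤ 2 * l ^ 2 * exp (-l) := hc ▸ truncPoissonMean_sub_self_le hl
      _ ≤ 2 * c ^ 2 * (3 * exp (-c)) := by gcongr
      _ = 6 * c ^ 2 * exp (-c) := by ring

end TruncPoisson

open TruncPoisson in
/-- For every `c > 2` there is a unique positive `λ_c` with `E[χ(λ_c)] = c`, and as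
`c → ∞`, `λ_c = c − c²e^{−c} ± e^{−2c + O(log c)}` and `η̄_c = c ± e^{−c + O(log c)}`. -/
theorem stmt17 :
    (∀ c : ℝ, 2 < c → ∃! lam : ℝ, 0 < lam ∧ truncPoissonMean lam = c) ∧
    ∃ C : ℝ, 0 < C ∧ ∃ c₀ : ℝ, 2 < c₀ ∧
      ∀ c : ℝ, c₀ ≤ c → ∀ lam : ℝ, 0 < lam → truncPoissonMean lam = c →
        |lam - (c - c ^ 2 * Real.exp (-c))| ≤ Real.exp (-2 * c + C * Real.log c) ∧
        |etaBar lam - c| ≤ Real.exp (-c + C * Real.log c) := by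
  refine ⟨fun c hc ↦ existsUnique_truncPoissonMean_eq hc, 5, by norm_num, 48, by norm_num, ?_⟩
  intro c hc l hl hlc
  have hl3 : 3 ≤ l := by linarith [hlc ▸ truncPoissonMean_le_add_two hl]
  have hpow : exp (5 * log c) = c ^ 5 := by
    rw [show (5 : ℝ) * log c = log (c ^ 5) by rw [log_pow]; norm_num, exp_log (by positivity)]
  have hexp2 : exp (-2 * c) = exp (-c) ^ 2 := by rw [← exp_nat_mul]; ring_nf
  rw [exp_add, exp_add, hpow, hexp2]
  constructor
  · calc _ ≤ 48 * c ^ 4 * exp (-c) ^ 2 := abs_self_sub_truncPoissonMean_le hl3 hlc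
      _ ≤ exp (-c) ^ 2 * c ^ 5 := by
        nlinarith [mul_nonneg (by positivity : 0 ≤ c ^ 4 * exp (-c) ^ 2) (by linarith : 0 ≤ c - 48)]
  · calc _ ≤ 6 * c ^ 2 * exp (-c) := abs_etaBar_sub_truncPoissonMean_le hl3 hlc
      _ ≤ exp (-c) * c ^ 5 := by
        have hc3 : 6 ≤ c ^ 3 := by nlinarith [pow_le_pow_left₀ (by norm_num) hc 3]
        nlinarith [mul_nonneg (by positivity : 0 ≤ c ^ 2 * exp (-c)) (by linarith : 0 ≤ c ^ 3 - 6)]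
end
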